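/- Let A and B be sets, let U ⊆ A with U ≠ ∅ and U ≠ A, and assume B has at least two elements. On A × B let α and β be the kernels of the first and second projections, and define γ = {((a,b),(a',b')) : a = a' and (a ∈ U or b = b')}. Then γ is an equivalence relation, and (A × B; α, β, γ) is a very special pentagon: α ⊓ β is the equality relation, α ∘ β is the all relation, γ ⊔ β is the all relation, γ < α, and for every a ∈ A the relation γᵃ := {(b,b') ∈ B² : ((a,b),(a,b')) ∈ γ} equals the all relation on B if a ∈ U and the equality relation on B if a ∉ U. -/
import Mathlib


/-- The relation `γ` on `A × B`: `((a,b),(a',b')) ∈ γ` iff `a = a'` and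
(`a ∈ U` or `b = b'`). -/
def gammaU {A B : Type*} (U : Set A) (x y : A × B) : Prop :=
  x.1 = y.1 ∧ (x.1 ∈ U ∨ x.2 = y.2)

theorem stmt11 {A B : Type*} (U : Set A) (hU : U.Nonempty) (hU' : U ≠ Set.univ)
    (hB : ∃ b b' : B, b ≠ b') :
    -- γ is an equivalence relation
    Equivalence (gammaU (B := B) U) ∧
    -- α ⊓ β is the equality relation
    (∀ x y : A × B, (x.1 = y.1 ∧ x.2 = y.2) ↔ x = y) ∧
    -- α ∘ β is the all relation
    (∀ x y : A × B, ∃ z : A × B, x.1 = z.1 ∧ z.2 = y.2) ∧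
    -- γ ⊔ β is the all relation
    (∀ x y : A × B, Relation.EqvGen (fun u v => gammaU U u v ∨ u.2 = v.2) x y) ∧
    -- γ < α
    ((∀ x y : A × B, gammaU U x y → x.1 = y.1) ∧
      (∃ x y : A × B, x.1 = y.1 ∧ ¬ gammaU U x y)) ∧
    -- γᵃ is the all relation on B for a ∈ U
    (∀ a ∈ U, ∀ b b' : B, gammaU U (a, b) (a, b')) ∧
    -- γᵃ is the equality relation on B for a ∉ U
    (∀ a ∉ U, ∀ b b' : B, gammaU U (a, b) (a, b') ↔ b = b') := by
  obtain ⟨u, hu⟩ := hU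
  obtain ⟨a₀, ha₀⟩ : ∃ a : A, a ∉ U := by
    by_contra h
    push_neg at h
    exact hU' (Set.eq_univ_of_forall h)
  obtain ⟨b₀, b₁, hb⟩ := hB
  refine ⟨⟨fun x => ⟨rfl, Or.inr rfl⟩, ?_, ?_⟩, ?_, ?_, ?_, ⟨?_, ?_⟩, ?_, ?_⟩
  · rintro x y ⟨h1, h2⟩
    refine ⟨h1.symm, ?_⟩
    rcases h2 with h | h
    · exact Or.inl (h1 ▸ h)
    · exact Or.inr h.symm
  · rintro x y z ⟨h1, h2⟩ ⟨h3, h4⟩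
    refine ⟨h1.trans h3, ?_⟩
    rcases h2 with h | h
    · exact Or.inl h
    · rcases h4 with h' | h'
      · exact Or.inl (h1 ▸ h')
      · exact Or.inr (h.trans h')
  · intro x y
    constructor
    · rintro ⟨h1, h2⟩; exact Prod.ext h1 h2
    · rintro rfl; exact ⟨rfl, rfl⟩
  · intro x y
    exact ⟨(x.1, y.2), rfl, rfl⟩
  · rintro ⟨a, b⟩ ⟨a', b'⟩
    have s1 : Relation.EqvGen (fun u v : A × B => gammaU U u v ∨ u.2 = v.2) (a, b) (u, b) :=
      Relation.EqvGen.rel _ _ (Or.inr rfl)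
    have s2 : Relation.EqvGen (fun u v : A × B => gammaU U u v ∨ u.2 = v.2) (u, b) (u, b') :=
      Relation.EqvGen.rel _ _ (Or.inl ⟨rfl, Or.inl hu⟩)
    have s3 : Relation.EqvGen (fun u v : A × B => gammaU U u v ∨ u.2 = v.2) (u, b') (a', b') :=
      Relation.EqvGen.rel _ _ (Or.inr rfl)
    exact (s1.trans _ _ _ s2).trans _ _ _ s3
  · rintro x y ⟨h, _⟩; exact h
  · refine ⟨(a₀, b₀), (a₀, b₁), rfl, ?_⟩
    rintro ⟨-, h | h⟩
    · exact ha₀ h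
    · exact hb h
  · intro a ha b b'
    exact ⟨rfl, Or.inl ha⟩
  · intro a ha b b'
    constructor
    · rintro ⟨-, h | h⟩
      · exact absurd h ha
      · exact h
    · rintro rfl; exact ⟨rfl, Or.inr rfl⟩
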